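/- If M is a vertex of the ι-invariant Birkhoff polytope B_d^ι, then the matrix 2M has nonnegative integer entries, all row sums and column sums of 2M equal 2, and 2M is invariant under ι. -/

import Mathlib

/-- The `ι`-invariant Birkhoff polytope for the involution `(ιM)_{ij} = M_{φ(i)ψ(j)}`. -/
def invBirkhoff (d : ℕ) (φ ψ : Equiv.Perm (Fin d)) : Set (Matrix (Fin d) (Fin d) ℝ) :=
  {M | M ∈ doublyStochastic ℝ (Fin d) ∧ (fun i j => M (φ i) (ψ j)) = M}

section aux

variable {d : ℕ} (φ ψ : Equiv.Perm (Fin d))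

/-- The involution `ι` as a linear map. -/
def iotaMap : Matrix (Fin d) (Fin d) ℝ →ₗ[ℝ] Matrix (Fin d) (Fin d) ℝ where
  toFun M := fun i j => M (φ i) (ψ j)
  map_add' _ _ := rfl
  map_smul' _ _ := rfl

lemma iotaMap_apply (M : Matrix (Fin d) (Fin d) ℝ) (i j : Fin d) :
    iotaMap φ ψ M i j = M (φ i) (ψ j) := rfl

lemma iota_mem_ds {M : Matrix (Fin d) (Fin d) ℝ} (hM : M ∈ doublyStochastic ℝ (Fin d)) :
    iotaMap φ ψ M ∈ doublyStochastic ℝ (Fin d) := by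
  rw [mem_doublyStochastic_iff_sum] at hM ⊢
  refine ⟨fun i j => hM.1 _ _, fun i => ?_, fun j => ?_⟩
  · show ∑ j, M (φ i) (ψ j) = 1
    rw [Fintype.sum_equiv ψ _ (fun j => M (φ i) j) (fun j => rfl)]
    exact hM.2.1 (φ i)
  · show ∑ i, M (φ i) (ψ j) = 1
    rw [Fintype.sum_equiv φ _ (fun i => M i (ψ j)) (fun i => rfl)]
    exact hM.2.2 (ψ j)

lemma symMap_mem (hφ : φ * φ = 1) (hψ : ψ * ψ = 1) {P : Matrix (Fin d) (Fin d) ℝ}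
    (hP : P ∈ doublyStochastic ℝ (Fin d)) :
    (2 : ℝ)⁻¹ • (P + iotaMap φ ψ P) ∈ invBirkhoff d φ ψ := by
  have hφ' : ∀ i, φ (φ i) = i := fun i => by
    have := Equiv.ext_iff.mp hφ i; simpa [Equiv.Perm.mul_apply] using this
  have hψ' : ∀ j, ψ (ψ j) = j := fun j => by
    have := Equiv.ext_iff.mp hψ j; simpa [Equiv.Perm.mul_apply] using this
  constructor
  · have := convex_doublyStochastic (R := ℝ) (n := Fin d) hP (iota_mem_ds φ ψ hP)
      (by norm_num : (0:ℝ) ≤ 2⁻¹) (by norm_num : (0:ℝ) ≤ 2⁻¹) (by norm_num)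
    simpa [smul_add] using this
  · funext i j
    simp only [Matrix.add_apply, Matrix.smul_apply, iotaMap_apply]
    rw [hφ' i, hψ' j]
    ring_nf

lemma convex_invBirkhoff : Convex ℝ (invBirkhoff d φ ψ) := by
  intro x hx y hy a b ha hb hab
  refine ⟨convex_doublyStochastic hx.1 hy.1 ha hb hab, ?_⟩
  funext i j
  have hx2 := congrFun (congrFun hx.2 i) j
  have hy2 := congrFun (congrFun hy.2 i) j
  simp only [Matrix.add_apply, Matrix.smul_apply, smul_eq_mul] at *
  rw [hx2, hy2]

end aux

/-- If `M` is a vertex of `B_d^ι`, then `2M` has nonnegative integer entries, all row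
and column sums of `2M` equal `2`, and `2M` is invariant under `ι`. -/
theorem stmt_6 (d : ℕ) (φ ψ : Equiv.Perm (Fin d)) (hφ : φ * φ = 1) (hψ : ψ * ψ = 1)
    (M : Matrix (Fin d) (Fin d) ℝ)
    (hM : M ∈ Set.extremePoints ℝ (invBirkhoff d φ ψ)) :
    (∀ i j, ∃ n : ℕ, 2 * M i j = (n : ℝ)) ∧
    (∀ i, ∑ j, 2 * M i j = 2) ∧ (∀ j, ∑ i, 2 * M i j = 2) ∧
    (∀ i j, 2 * M (φ i) (ψ j) = 2 * M i j) := by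
  obtain ⟨⟨hds, hinv⟩, hext⟩ := hM
  have hMds := hds
  rw [mem_doublyStochastic_iff_sum] at hMds
  refine ⟨?_, fun i => ?_, fun j => ?_, fun i j => ?_⟩
  · -- the hard part: half-integrality
    -- symmetrization map
    set f : Matrix (Fin d) (Fin d) ℝ →ₗ[ℝ] Matrix (Fin d) (Fin d) ℝ :=
      (2 : ℝ)⁻¹ • (LinearMap.id + iotaMap φ ψ) with hf
    have hfM : f M = M := by
      funext i j
      have h2 := congrFun (congrFun hinv i) j
      simp only [hf, LinearMap.smul_apply, LinearMap.add_apply, LinearMap.id_apply,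
        Matrix.smul_apply, Matrix.add_apply, smul_eq_mul, iotaMap_apply]
      rw [h2]; ring
    -- M lies in the image under f of the convex hull of permutation matrices
    have hhull : M ∈ convexHull ℝ (f '' {σ.permMatrix ℝ | σ : Equiv.Perm (Fin d)}) := by
      rw [← LinearMap.image_convexHull, ← doublyStochastic_eq_convexHull_permMatrix]
      exact ⟨M, hds, hfM⟩
    -- the image set is contained in invBirkhoff
    have hsub : f '' {σ.permMatrix ℝ | σ : Equiv.Perm (Fin d)} ⊆ invBirkhoff d φ ψ := by
      rintro _ ⟨P, ⟨σ, rfl⟩, rfl⟩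
      have hfP : f (σ.permMatrix ℝ) =
          (2 : ℝ)⁻¹ • (σ.permMatrix ℝ + iotaMap φ ψ (σ.permMatrix ℝ)) := by
        simp [hf]
      rw [hfP]
      exact symMap_mem φ ψ hφ hψ (permMatrix_mem_doublyStochastic (σ := σ))
    -- M is an extreme point of the (smaller) convex hull
    have hextHull : M ∈ Set.extremePoints ℝ
        (convexHull ℝ (f '' {σ.permMatrix ℝ | σ : Equiv.Perm (Fin d)})) := by
      refine ⟨hhull, fun x₁ hx₁ x₂ hx₂ hseg => ?_⟩
      have hs := convexHull_min hsub (convex_invBirkhoff φ ψ)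
      exact hext (hs hx₁) (hs hx₂) hseg
    have := extremePoints_convexHull_subset hextHull
    obtain ⟨P, ⟨σ, rfl⟩, hPM⟩ := this
    intro i j
    have h2M : 2 * M i j = σ.permMatrix ℝ i j + σ.permMatrix ℝ (φ i) (ψ j) := by
      have := congrFun (congrFun hPM i) j
      simp only [hf, LinearMap.smul_apply, LinearMap.add_apply, LinearMap.id_apply,
        Matrix.smul_apply, Matrix.add_apply, smul_eq_mul, iotaMap_apply] at this
      rw [← this]; ring
    have hent : ∀ a b, σ.permMatrix ℝ a b = 0 ∨ σ.permMatrix ℝ a b = 1 := by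
      intro a b
      simp only [Equiv.Perm.permMatrix, PEquiv.toMatrix_apply, Equiv.toPEquiv_apply]
      split_ifs <;> simp <;> tauto
    rcases hent i j with h1 | h1 <;> rcases hent (φ i) (ψ j) with h2 | h2
    · exact ⟨0, by rw [h2M, h1, h2]; norm_num⟩
    · exact ⟨1, by rw [h2M, h1, h2]; norm_num⟩
    · exact ⟨1, by rw [h2M, h1, h2]; norm_num⟩
    · exact ⟨2, by rw [h2M, h1, h2]; norm_num⟩
  · rw [← Finset.mul_sum, hMds.2.1 i]; norm_num
  · rw [← Finset.mul_sum, hMds.2.2 j]; norm_num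
  · have := congrFun (congrFun hinv i) j
    rw [this]
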